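/- arXiv:1512.02335 — 3 statements merged into one kernel-verified Lean document; each statement's English description precedes it below -/
import Mathlib

section
/- Let M ≥ 2 and let θ : (ZMod M) × (ZMod M) → ℝ be a phase configuration on the M × M periodic lattice such that for every pair of nearest-neighbor sites (i.e., sites differing by 1 in exactly one coordinate, with periodic identification) the difference of phases is not congruent to π modulo 2π. For each cell (i, j) let C(i,j) be the lattice curl of the 4-tuple (θ(i,j), θ(i+1,j), θ(i+1,j+1), θ(i,j+1)). Then the sum of C(i,j) over all M² cells equals 0. -/
open Real Finset

/-- `wrap x` is the unique number in the interval `(-π, π]` congruent to `x` modulo `2π`. -/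
noncomputable def wrap (x : ℝ) : ℝ := toIocMod Real.two_pi_pos (-Real.pi) x

/-- `x` is not congruent to `π` modulo `2π`. -/
def NotPiMod (x : ℝ) : Prop := ∀ k : ℤ, x ≠ Real.pi + 2 * Real.pi * k

/-- The lattice curl of the cell of the `M × M` periodic lattice with lower-left corner
`(i, j)`, whose corners in cyclic order are `(i,j), (i+1,j), (i+1,j+1), (i,j+1)`. -/
noncomputable def latticeCurl {M : ℕ} (θ : ZMod M × ZMod M → ℝ) (i j : ZMod M) : ℝ :=
  wrap (θ (i + 1, j) - θ (i, j)) + wrap (θ (i + 1, j + 1) - θ (i + 1, j)) +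
    wrap (θ (i, j + 1) - θ (i + 1, j + 1)) + wrap (θ (i, j) - θ (i, j + 1))

/-! Each edge of the torus bounds exactly two cells, which traverse it in opposite directions.
Since no edge difference is `≡ π`, `wrap` is odd on it, so the two contributions cancel. -/

-- `wrap x = π` is the only obstruction, as `-π ∉ (-π, π]`.
lemma wrap_neg {x : ℝ} (h : NotPiMod x) : wrap (-x) = -wrap x := by
  obtain ⟨⟨hlow, hhigh⟩, z, hz⟩ : wrap x ∈ Set.Ioc (-π) (-π + 2 * π) ∧
      ∃ z : ℤ, x = wrap x + z • (2 * π) :=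
    (toIocMod_eq_iff Real.two_pi_pos).1 rfl
  have hne : wrap x ≠ π := fun hπ => h z (by rw [hz, hπ, zsmul_eq_mul]; ring)
  have hlt : wrap x < π := lt_of_le_of_ne (by linarith) hne
  rw [wrap, toIocMod_eq_iff Real.two_pi_pos]
  refine ⟨⟨by linarith, by linarith⟩, -z, ?_⟩
  rw [zsmul_eq_mul] at hz ⊢
  push_cast
  linarith

lemma wrap_sub_comm {a b : ℝ} (h : NotPiMod (a - b)) : wrap (b - a) = -wrap (a - b) := by
  rw [← neg_sub, wrap_neg h]

theorem sum_plaquette_eq_zero {G A : Type*} [AddCommGroup G] [Fintype G] [AddCommGroup A]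
    (f : G → G → A) (u v : G) :
    ∑ c, (f c u + f (c + u) v - f (c + v) u - f c v) = 0 := by
  have shift (w d : G) : ∑ c, f (c + w) d = ∑ c, f c d :=
    Equiv.sum_comp (Equiv.addRight w) (f · d)
  simp only [sum_sub_distrib, sum_add_distrib, shift]
  abel

lemma latticeCurl_eq {M : ℕ} (θ : ZMod M × ZMod M → ℝ) (i j : ZMod M)
    (hE : NotPiMod (θ (i + 1, j + 1) - θ (i, j + 1))) (hN : NotPiMod (θ (i, j + 1) - θ (i, j))) :
    latticeCurl θ i j = wrap (θ (i + 1, j) - θ (i, j)) + wrap (θ (i + 1, j + 1) - θ (i + 1, j))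
      - wrap (θ (i + 1, j + 1) - θ (i, j + 1)) - wrap (θ (i, j + 1) - θ (i, j)) := by
  rw [latticeCurl, wrap_sub_comm hE, wrap_sub_comm hN]
  ring

theorem sum_latticeCurl_torus_general (M : ℕ) [NeZero M]
    (θ : ZMod M × ZMod M → ℝ)
    (hE : ∀ i j : ZMod M, NotPiMod (θ (i + 1, j) - θ (i, j)))
    (hN : ∀ i j : ZMod M, NotPiMod (θ (i, j + 1) - θ (i, j))) :
    ∑ c : ZMod M × ZMod M, latticeCurl θ c.1 c.2 = 0 := by
  rw [← sum_plaquette_eq_zero (fun c d => wrap (θ (c + d) - θ c)) (1, 0) (0, 1)]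
  refine sum_congr rfl fun ⟨i, j⟩ _ => ?_
  rw [latticeCurl_eq θ i j (hE _ _) (hN _ _)]
  simp only [Prod.mk_add_mk, add_zero]

/-- On the `M × M` torus (`M ≥ 2`), if no nearest-neighbor phase difference is congruent
to `π` mod `2π`, then the sum of the lattice curls over all `M²` cells is `0`. -/
theorem sum_latticeCurl_torus (M : ℕ) [NeZero M] (hM : 2 ≤ M)
    (θ : ZMod M × ZMod M → ℝ)
    (hE : ∀ i j : ZMod M, NotPiMod (θ (i + 1, j) - θ (i, j)))
    (hN : ∀ i j : ZMod M, NotPiMod (θ (i, j + 1) - θ (i, j))) :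
    ∑ c : ZMod M × ZMod M, latticeCurl θ c.1 c.2 = 0 :=
  sum_latticeCurl_torus_general M θ hE hN
end

section
/- Let κ = 1 + √2. There exist constants C > 0 and ε₀ ∈ (0, 1) such that for all ε ∈ (0, ε₀) the following holds: set Ω = 1 − 2ε², ζ(t) = (Ω/ε)·t, and θ_i(t) = ε·(1/(2κ) − cos(ζ(t) − iπ/2)) for i = 0, 1, 2, 3. Then for all t ∈ ℝ, | (1/ε) − Σ_{i=0}^{3} sin(ζ(t) − θ_i(t) − iπ/2) − Ω/ε | ≤ C·ε³. (This verifies, to the stated order, the Lindstedt-series prediction that the frequency spiral of the minimal model with large central frequency ω = 1/ε rotates with normalized angular frequency Ω = 1 − 2ε² + O(ε⁴): the leading-order periodic ansatz satisfies the ζ-equation of the minimal model with residual O(ε³).) -/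
/-!
Expand each `sin (ζ - iπ/2 - θ_i)` to second order in `θ_i = O(ε)`; the remainders are `O(ε³)`.
Over the four quarter-shifted phases the zeroth- and second-order terms cancel, while the
first-order terms add up to `2ε (cos² ζ + sin² ζ) = 2ε`, which is exactly `1/ε - Ω/ε`.
-/

open Real

noncomputable def sinSubTaylor2 (y θ : ℝ) : ℝ := sin y - θ * cos y - θ ^ 2 / 2 * sin y

lemma abs_sin_sub_sub_sinSubTaylor2_le (y : ℝ) {θ : ℝ} (hθ : |θ| ≤ 1) :
    |sin (y - θ) - sinSubTaylor2 y θ| ≤ |θ| ^ 3 := by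
  have hcos : |cos θ - (1 - θ ^ 2 / 2)| ≤ |θ| ^ 3 * (5 / 96) := by
    refine (cos_bound hθ).trans (mul_le_mul_of_nonneg_right ?_ (by norm_num))
    exact pow_le_pow_of_le_one (abs_nonneg θ) hθ (by norm_num)
  have hsin : |sin θ - θ| ≤ |θ| ^ 3 / 6 := by
    rw [abs_sub_comm]; exact abs_sub_sin_le θ
  calc |sin (y - θ) - sinSubTaylor2 y θ|
      = |sin y * (cos θ - (1 - θ ^ 2 / 2)) - cos y * (sin θ - θ)| := by
        rw [sin_sub, sinSubTaylor2]; ring_nf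
    _ ≤ |sin y| * |cos θ - (1 - θ ^ 2 / 2)| + |cos y| * |sin θ - θ| := by
        rw [← abs_mul, ← abs_mul]; exact abs_sub _ _
    _ ≤ 1 * (|θ| ^ 3 * (5 / 96)) + 1 * (|θ| ^ 3 / 6) := by
        gcongr
        exacts [abs_sin_le_one y, abs_cos_le_one y]
    _ ≤ |θ| ^ 3 := by linarith [pow_nonneg (abs_nonneg θ) 3]

lemma abs_sum_sin_sub_sum_sinSubTaylor2_le {ι : Type*} (s : Finset ι) (y θ : ι → ℝ) {δ : ℝ}
    (hδ : δ ≤ 1) (hθ : ∀ i ∈ s, |θ i| ≤ δ) :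
    |∑ i ∈ s, sin (y i - θ i) - ∑ i ∈ s, sinSubTaylor2 (y i) (θ i)| ≤ s.card * δ ^ 3 := by
  rw [← Finset.sum_sub_distrib]
  refine (Finset.abs_sum_le_sum_abs _ _).trans ?_
  rw [← nsmul_eq_mul]
  refine Finset.sum_le_card_nsmul _ _ _ fun i hi => ?_
  refine (abs_sin_sub_sub_sinSubTaylor2_le _ ((hθ i hi).trans hδ)).trans ?_
  gcongr
  exact hθ i hi

lemma sum_sinSubTaylor2_quarter_phases (ε a ζ : ℝ) :
    ∑ i ∈ Finset.range 4,
      sinSubTaylor2 (ζ - i * (π / 2)) (ε * (a - cos (ζ - i * (π / 2)))) = 2 * ε := by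
  have h2 : ζ - 2 * (π / 2) = ζ - π := by ring
  have h3 : ζ - 3 * (π / 2) = ζ - π - π / 2 := by ring
  simp only [Finset.sum_range_succ, Finset.sum_range_zero, sinSubTaylor2, Nat.cast_ofNat,
    Nat.cast_zero, Nat.cast_one, zero_mul, sub_zero, one_mul, h2, h3, sin_sub_pi_div_two,
    cos_sub_pi_div_two, sin_sub_pi, cos_sub_pi]
  linear_combination 2 * ε * sin_sq_add_cos_sq ζ

/-- Lindstedt-series verification for the minimal frequency-spiral model (`κ = 1+√2`,
large central frequency `ω = 1/ε`): with `Ω = 1 − 2ε²`, `ζ(t) = (Ω/ε)t`, and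
`θ_i(t) = ε(1/(2κ) − cos(ζ(t) − iπ/2))`, the leading-order periodic ansatz satisfies
the `ζ`-equation `dζ/dt = 1/ε − Σ_{i=0}^{3} sin(ζ − θ_i − iπ/2)` with residual `O(ε³)`,
uniformly in `t`. (For this ansatz `dζ/dt = Ω/ε` exactly.) -/
theorem minimalSpiral_lindstedt_zeta_residual :
    ∃ C : ℝ, 0 < C ∧ ∃ ε₀ : ℝ, 0 < ε₀ ∧ ε₀ < 1 ∧
      ∀ ε : ℝ, 0 < ε → ε < ε₀ → ∀ t : ℝ,
        let κ : ℝ := 1 + Real.sqrt 2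
        let Ω : ℝ := 1 - 2 * ε ^ 2
        let ζ : ℝ := (Ω / ε) * t
        let θ : ℕ → ℝ := fun i => ε * (1 / (2 * κ) - Real.cos (ζ - (i : ℝ) * (Real.pi / 2)))
        |1 / ε -
            (Real.sin (ζ - θ 0) + Real.sin (ζ - θ 1 - Real.pi / 2) +
              Real.sin (ζ - θ 2 - Real.pi) + Real.sin (ζ - θ 3 - 3 * Real.pi / 2)) -
            Ω / ε| ≤ C * ε ^ 3 := by
  refine ⟨27 / 2, by norm_num, 1 / 2, by norm_num, by norm_num, ?_⟩
  intro ε hε hε₀ t κ Ω ζ θ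
  have ha : |1 / (2 * κ)| ≤ 1 / 2 := by
    have hκ : 1 ≤ κ := le_add_of_nonneg_right (sqrt_nonneg 2)
    rw [abs_of_pos (by positivity)]
    exact one_div_le_one_div_of_le two_pos (by linarith)
  have hθ : ∀ i ∈ Finset.range 4, |θ i| ≤ 3 / 2 * ε := fun i _ =>
    calc |θ i| = ε * |1 / (2 * κ) - cos (ζ - i * (π / 2))| := by
          rw [abs_mul, abs_of_pos hε]
      _ ≤ ε * (1 / 2 + 1) := by
          gcongr
          exact (abs_sub _ _).trans (add_le_add ha (abs_cos_le_one _))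
      _ = 3 / 2 * ε := by ring
  have hsum : sin (ζ - θ 0) + sin (ζ - θ 1 - π / 2) + sin (ζ - θ 2 - π) +
      sin (ζ - θ 3 - 3 * π / 2) = ∑ i ∈ Finset.range 4, sin ((ζ - i * (π / 2)) - θ i) := by
    simp only [Finset.sum_range_succ, Finset.sum_range_zero]
    ring_nf
  have hres : 1 / ε - Ω / ε = 2 * ε := by field_simp; ring
  calc _ = |∑ i ∈ Finset.range 4, sin ((ζ - i * (π / 2)) - θ i) -
        ∑ i ∈ Finset.range 4, sinSubTaylor2 (ζ - i * (π / 2)) (θ i)| := by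
        rw [sum_sinSubTaylor2_quarter_phases, ← hres, hsum, ← abs_neg]; congr 1; ring
    _ ≤ (Finset.range 4).card * (3 / 2 * ε) ^ 3 :=
        abs_sum_sin_sub_sum_sinSubTaylor2_le _ _ _ (by linarith) hθ
    _ = 27 / 2 * ε ^ 3 := by rw [Finset.card_range]; ring
end

section
/- Let κ = 1 + √2. There exist constants C > 0 and ε₀ ∈ (0, 1) such that for all ε ∈ (0, ε₀) the following holds: set Ω = 1 − 2ε², ζ(t) = (Ω/ε)·t, and θ_i(t) = ε·(1/(2κ) − cos(ζ(t) − iπ/2)) for i = 0, 1, 2, 3. Then for all t ∈ ℝ and each i ∈ {0, 1, 2, 3}, | d/dt θ_i(t) − ( sin(ζ(t) − θ_i(t) − iπ/2) − κ·sin θ_i(t) ) | ≤ C·ε. (To leading order, the four neighbors of the runaway central oscillator librate sinusoidally with amplitude ε about the offset ε/(2κ): the leading-order ansatz satisfies each θ-equation of the minimal model with residual O(ε), while the terms being balanced are of size O(1).) -/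
open Real

/-!
Writing `x = (Ω/ε) t − iπ/2`, the ansatz has derivative `Ω sin x`, and expanding `sin (x − θ)`
turns the residual into `sin x (Ω − cos θ) + (cos x + κ) sin θ`. Since `|θ| ≤ 2ε`, the second
term is `O(ε)` and `|Ω − cos θ| ≤ |1 − Ω| + θ²/2 = O(ε²)`; the correction `−2ε²` in `Ω` only
matters at the next order.
-/

theorem hasDerivAt_mul_const_sub_cos (ε c a φ t : ℝ) :
    HasDerivAt (fun s => ε * (c - cos (a * s - φ))) (ε * a * sin (a * t - φ)) t := by
  have hx : HasDerivAt (fun s => a * s - φ) a t := by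
    simpa using ((hasDerivAt_id t).const_mul a).sub_const φ
  have h := ((hx.cos).const_sub c).const_mul ε
  rwa [neg_mul, neg_neg, mul_comm (sin _), ← mul_assoc] at h

theorem residual_eq (Ω κ x θ : ℝ) :
    Ω * sin x - (sin (x - θ) - κ * sin θ) = sin x * (Ω - cos θ) + (cos x + κ) * sin θ := by
  rw [sin_sub]
  ring

theorem abs_residual_le (Ω κ x θ : ℝ) :
    |Ω * sin x - (sin (x - θ) - κ * sin θ)| ≤ |Ω - cos θ| + (1 + |κ|) * |θ| := by
  rw [residual_eq]
  have hcos : |cos x + κ| ≤ 1 + |κ| := (abs_add_le _ _).trans (by gcongr; exact abs_cos_le_one x)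
  calc |sin x * (Ω - cos θ) + (cos x + κ) * sin θ|
      ≤ |sin x| * |Ω - cos θ| + |cos x + κ| * |sin θ| := by
        rw [← abs_mul, ← abs_mul]; exact abs_add_le _ _
    _ ≤ 1 * |Ω - cos θ| + (1 + |κ|) * |θ| := by
        gcongr ?_ * _ + ?_ * ?_
        · exact abs_sin_le_one x
        · exact abs_sin_le_abs
    _ = |Ω - cos θ| + (1 + |κ|) * |θ| := by ring

theorem abs_sub_cos_le (Ω θ : ℝ) : |Ω - cos θ| ≤ |1 - Ω| + θ ^ 2 / 2 := by
  have hlow := one_sub_sq_div_two_le_cos (x := θ)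
  have hup := cos_le_one θ
  have h := le_abs_self (1 - Ω)
  have h' := neg_abs_le (1 - Ω)
  rw [abs_le]
  constructor <;> linarith

theorem abs_mul_const_sub_cos_le {ε c : ℝ} (hε : 0 ≤ ε) (hc₀ : 0 ≤ c) (hc₁ : c ≤ 1) (x : ℝ) :
    |ε * (c - cos x)| ≤ 2 * ε := by
  have hcos := abs_le.1 (abs_cos_le_one x)
  rw [abs_mul, abs_of_nonneg hε, mul_comm]
  gcongr
  rw [abs_le]
  constructor <;> linarith

/-- Lindstedt-series verification for the minimal frequency-spiral model (`κ = 1+√2`,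
large central frequency `ω = 1/ε`): with `Ω = 1 − 2ε²`, `ζ(t) = (Ω/ε)t`, and
`θ_i(t) = ε(1/(2κ) − cos(ζ(t) − iπ/2))`, the leading-order ansatz satisfies each
`θ`-equation `dθ_i/dt = sin(ζ − θ_i − iπ/2) − κ sin θ_i` with residual `O(ε)`,
uniformly in `t`: the four neighbors librate sinusoidally with amplitude `ε` about
the offset `ε/(2κ)`. -/
theorem minimalSpiral_lindstedt_theta_residual :
    ∃ C : ℝ, 0 < C ∧ ∃ ε₀ : ℝ, 0 < ε₀ ∧ ε₀ < 1 ∧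
      ∀ ε : ℝ, 0 < ε → ε < ε₀ → ∀ (i : Fin 4) (t : ℝ),
        let κ : ℝ := 1 + Real.sqrt 2
        let Ω : ℝ := 1 - 2 * ε ^ 2
        let θi : ℝ → ℝ := fun s =>
          ε * (1 / (2 * κ) - Real.cos ((Ω / ε) * s - ((i : ℕ) : ℝ) * (Real.pi / 2)))
        |deriv θi t -
            (Real.sin ((Ω / ε) * t - θi t - ((i : ℕ) : ℝ) * (Real.pi / 2)) -
              κ * Real.sin (θi t))| ≤ C * ε := by
  refine ⟨4 + 2 * (2 + √2), by positivity, 1 / 2, by norm_num, by norm_num, ?_⟩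
  intro ε hε hε₀ i t κ Ω θi
  set x := Ω / ε * t - ((i : ℕ) : ℝ) * (π / 2)
  have hκ : 1 ≤ κ := le_add_of_nonneg_right (sqrt_nonneg 2)
  have hderiv : deriv θi t = Ω * sin x := by
    rw [(hasDerivAt_mul_const_sub_cos ε _ _ _ t).deriv, mul_div_cancel₀ _ hε.ne']
  have hθ : |θi t| ≤ 2 * ε :=
    abs_mul_const_sub_cos_le hε.le (by positivity)
      ((div_le_one (by positivity)).2 (by linarith)) x
  have hΩ : |Ω - cos (θi t)| ≤ 4 * ε := by
    have hsq : θi t ^ 2 ≤ (2 * ε) ^ 2 := sq_le_sq' (abs_le.1 hθ).1 (abs_le.1 hθ).2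
    have h1Ω : |1 - Ω| = 2 * ε ^ 2 := by simp only [Ω, sub_sub_cancel]; exact abs_of_nonneg (by positivity)
    nlinarith [abs_sub_cos_le Ω (θi t)]
  rw [hderiv, show Ω / ε * t - θi t - ((i : ℕ) : ℝ) * (π / 2) = x - θi t by ring]
  calc _ ≤ |Ω - cos (θi t)| + (1 + |κ|) * |θi t| := abs_residual_le Ω κ x (θi t)
    _ ≤ 4 * ε + (1 + κ) * (2 * ε) := by
        rw [abs_of_pos (by linarith : 0 < κ)]; gcongr
    _ = (4 + 2 * (2 + √2)) * ε := by simp only [κ]; ring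
end
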